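/- arXiv:1011.2536 — 7 statements merged into one kernel-verified Lean document; each statement's English description precedes it below -/
import Mathlib

section
/- Let U be an open subset of ℝⁿ, S : U → ℝ a C¹ function whose gradient has no zeros on U, and u : U → ℂ continuous. Then the limit as α → 0⁺ of Re(u(x)·exp(i·S(x)/α)) exists for all x in U if and only if u(x) = 0 for all x in U. -/
/-!
At a point with `c = u x` and `s = S x`, as `α → 0⁺` the phase `s / α` runs off to
`±∞` whenever `s ≠ 0`, so a limit of `Re (c * exp (i s / α))` would be a limit of the
`2π`-periodic function `θ ↦ Re (c * exp (i θ))` at `±∞`; a periodic function with a limit there is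
constant, and `Re (c * exp (i θ))` is constant in `θ` only when `c = 0`. Hence `u` vanishes where
`S ≠ 0`. Since `dS ≠ 0`, `S` does not vanish identically near any point, so these points are dense
in `U`, and continuity of `u` gives `u = 0` on `U`.
-/

open Filter Topology Function Complex

namespace Function.Periodic

variable {α X : Type*} [Field α] [LinearOrder α] [IsStrictOrderedRing α] [Archimedean α]
  [TopologicalSpace X] [T2Space X] {f : α → X} {c : α} {L : X}

theorem eq_of_tendsto_atTop (hf : Periodic f c) (hc : 0 < c) (h : Tendsto f atTop (𝓝 L))
    (x : α) : f x = L := by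
  have hseq : Tendsto (fun k : ℕ => x + k * c) atTop atTop :=
    tendsto_atTop_add_const_left _ _ (tendsto_natCast_atTop_atTop.atTop_mul_const hc)
  exact tendsto_nhds_unique tendsto_const_nhds ((h.comp hseq).congr (hf.nat_mul · x))

theorem eq_of_tendsto_atBot (hf : Periodic f c) (hc : 0 < c) (h : Tendsto f atBot (𝓝 L))
    (x : α) : f x = L := by
  have hseq : Tendsto (fun k : ℕ => x - k * c) atTop atBot := by
    simpa only [sub_eq_add_neg, comp_apply] using tendsto_atBot_add_const_left _ x
      (tendsto_neg_atTop_atBot.comp (tendsto_natCast_atTop_atTop.atTop_mul_const hc))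
  exact tendsto_nhds_unique tendsto_const_nhds ((h.comp hseq).congr hf.sub_nat_mul_eq)

theorem eq_of_tendsto_comp_const_div_nhdsGT_zero [TopologicalSpace α] [OrderTopology α]
    (hf : Periodic f c) (hc : 0 < c) {s : α} (hs : s ≠ 0)
    (h : Tendsto (fun t => f (s / t)) (𝓝[>] 0) (𝓝 L)) (x : α) : f x = L := by
  have of_tendsto {l : Filter α} (hl : Tendsto (s / ·) l (𝓝[>] 0)) (hne : ∀ᶠ t in l, t ≠ 0) :
      Tendsto f l (𝓝 L) :=
    (h.comp hl).congr' (hne.mono fun t ht => by simp only [comp_apply, div_div_cancel₀ hs])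
  rcases hs.lt_or_gt with hneg | hpos
  · refine hf.eq_of_tendsto_atBot hc (of_tendsto ?_ (eventually_ne_atBot 0)) x
    refine tendsto_nhdsWithin_of_tendsto_nhds_of_eventually_within _
      (tendsto_const_nhds.div_atBot tendsto_id) ?_
    filter_upwards [eventually_lt_atBot 0] with t ht using div_pos_of_neg_of_neg hneg ht
  · refine hf.eq_of_tendsto_atTop hc (of_tendsto ?_ (eventually_ne_atTop 0)) x
    refine tendsto_nhdsWithin_of_tendsto_nhds_of_eventually_within _
      (tendsto_const_nhds.div_atTop tendsto_id) ?_
    filter_upwards [eventually_gt_atTop 0] with t ht using div_pos hpos ht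

end Function.Periodic

theorem Complex.eq_zero_of_forall_re_mul_exp_mul_I_eq {c : ℂ} {L : ℝ}
    (h : ∀ θ : ℝ, (c * exp (θ * I)).re = L) : c = 0 := by
  have h0 : c.re = L := by simpa using h 0
  have hπ : -c.re = L := by simpa [exp_mul_I] using h Real.pi
  have hπ2 : -c.im = L := by simpa [exp_mul_I] using h (Real.pi / 2)
  apply Complex.ext <;> simp only [zero_re, zero_im] <;> linarith

theorem Complex.eq_zero_of_tendsto_re_mul_exp_I_mul_div {c : ℂ} {s L : ℝ} (hs : s ≠ 0)
    (h : Tendsto (fun α : ℝ => (c * exp (I * s / α)).re) (𝓝[>] 0) (𝓝 L)) : c = 0 := by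
  refine eq_zero_of_forall_re_mul_exp_mul_I_eq (L := L) fun θ => ?_
  have hper : Periodic (fun θ : ℝ => (c * exp (θ * I)).re) (2 * Real.pi) := fun θ => by
    push_cast
    exact congrArg (fun z => (c * z).re) (exp_mul_I_periodic (θ : ℂ))
  refine hper.eq_of_tendsto_comp_const_div_nhdsGT_zero Real.two_pi_pos hs ?_ θ
  convert h using 5
  push_cast
  ring

theorem frequently_ne_zero_of_fderiv_ne_zero {𝕜 E F : Type*} [NontriviallyNormedField 𝕜]
    [NormedAddCommGroup E] [NormedSpace 𝕜 E] [NormedAddCommGroup F] [NormedSpace 𝕜 F]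
    {f : E → F} {x : E} (hf : fderiv 𝕜 f x ≠ 0) : ∃ᶠ y in 𝓝 x, f y ≠ 0 := by
  by_contra! hzero
  have hconst : f =ᶠ[𝓝 x] fun _ => 0 := hzero
  exact hf (by rw [hconst.fderiv_eq, fderiv_const_apply])

theorem stmt_0_general {n : ℕ} (U : Set (Fin n → ℝ)) (hU : IsOpen U)
    (S : (Fin n → ℝ) → ℝ)
    (hgrad : ∀ x ∈ U, fderivWithin ℝ S U x ≠ 0)
    (u : (Fin n → ℝ) → ℂ) (hu : ContinuousOn u U) :
    (∀ x ∈ U, ∃ L : ℝ, Tendsto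
        (fun α : ℝ => (u x * Complex.exp (Complex.I * (S x : ℂ) / (α : ℂ))).re)
        (nhdsWithin 0 (Set.Ioi 0)) (nhds L))
      ↔ ∀ x ∈ U, u x = 0 := by
  refine ⟨fun h x hx => ?_, fun h x hx => ⟨0, by simp [h x hx]⟩⟩
  have hvanish : ∀ y ∈ U, S y ≠ 0 → u y = 0 := fun y hy hSy =>
    have ⟨_, hL⟩ := h y hy
    eq_zero_of_tendsto_re_mul_exp_I_mul_div hSy hL
  have hSne : ∃ᶠ y in 𝓝 x, S y ≠ 0 := by
    refine frequently_ne_zero_of_fderiv_ne_zero (𝕜 := ℝ) ?_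
    rw [← fderivWithin_of_isOpen hU hx]
    exact hgrad x hx
  have huzero : ∃ᶠ y in 𝓝 x, u y ∈ ({0} : Set ℂ) :=
    (hSne.and_eventually (hU.mem_nhds hx)).mono fun y hy => hvanish y hy.2 hy.1
  exact isClosed_singleton.mem_of_frequently_of_tendsto huzero
    (hu.continuousAt (hU.mem_nhds hx)).tendsto

theorem stmt_0 {n : ℕ} (U : Set (Fin n → ℝ)) (hU : IsOpen U)
    (S : (Fin n → ℝ) → ℝ) (hS : ContDiffOn ℝ 1 S U)
    (hgrad : ∀ x ∈ U, fderivWithin ℝ S U x ≠ 0)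
    (u : (Fin n → ℝ) → ℂ) (hu : ContinuousOn u U) :
    (∀ x ∈ U, ∃ L : ℝ, Tendsto
        (fun α : ℝ => (u x * Complex.exp (Complex.I * (S x : ℂ) / (α : ℂ))).re)
        (nhdsWithin 0 (Set.Ioi 0)) (nhds L))
      ↔ ∀ x ∈ U, u x = 0 :=
  stmt_0_general U hU S hgrad u hu
end

section
/- For any nonzero p ∈ ℝ³ and any 6×6 matrix M (constitutive matrix), the 6×6 matrix p_ρ L^ρ, where L^ρ = J^ρ · M with J^ρ the block matrix [[0, -A^ρ],[A^ρ, 0]], has a kernel of dimension at least 2; consequently 0 is an eigenvalue of p_ρ L^ρ of algebraic multiplicity at least 2. -/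
/-- The antisymmetric matrix `p_ρ A^ρ` representing `v ↦ p × v`. -/
def crossMat (p : Fin 3 → ℝ) : Matrix (Fin 3) (Fin 3) ℝ :=
  !![0, -p 2, p 1; p 2, 0, -p 0; -p 1, p 0, 0]

/-- The 6×6 antisymmetric block matrix `J(p) = [[0, -p_ρA^ρ],[p_ρA^ρ, 0]]`. -/
def bigJ (p : Fin 3 → ℝ) : Matrix (Fin 3 ⊕ Fin 3) (Fin 3 ⊕ Fin 3) ℝ :=
  Matrix.fromBlocks 0 (-(crossMat p)) (crossMat p) 0

/-!
A 3×3 antisymmetric matrix is singular, so both off-diagonal blocks of `J(p)` have a kernel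
vector, and these give two independent kernel vectors of `J(p)`. Right multiplication by `M`
cannot lower the nullity, and the geometric multiplicity of the eigenvalue `0` is at most its
algebraic multiplicity.
-/

open Matrix Module

section

variable {n K : Type*} [Fintype n] [DecidableEq n] [Field K]

theorem Matrix.finrank_ker_toLin'_le_mul (A B : Matrix n n K) :
    finrank K (LinearMap.ker (toLin' A)) ≤ finrank K (LinearMap.ker (toLin' (A * B))) := by
  have hrange : finrank K (LinearMap.range (toLin' (A * B))) ≤
      finrank K (LinearMap.range (toLin' A)) := by
    rw [toLin'_mul]
    exact Submodule.finrank_mono (LinearMap.range_comp_le_range _ _)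
  have hA := LinearMap.finrank_range_add_finrank_ker (toLin' A)
  have hAB := LinearMap.finrank_range_add_finrank_ker (toLin' (A * B))
  omega

theorem Matrix.finrank_ker_toLin'_le_rootMultiplicity_zero (A : Matrix n n K) :
    finrank K (LinearMap.ker (toLin' A)) ≤ A.charpoly.rootMultiplicity 0 := by
  rw [← Module.End.eigenspace_zero, ← charpoly_toLin']
  exact LinearMap.finrank_eigenspace_le _ 0

theorem Matrix.two_le_finrank_ker_fromBlocks_zero_zero {B C : Matrix n n K}
    (hB : B.det = 0) (hC : C.det = 0) :
    2 ≤ finrank K (LinearMap.ker (toLin' (fromBlocks 0 B C 0))) := by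
  obtain ⟨x, hx, hCx⟩ := exists_mulVec_eq_zero_iff.mpr hC
  obtain ⟨y, hy, hBy⟩ := exists_mulVec_eq_zero_iff.mpr hB
  have hindep : LinearIndependent K ![Sum.elim x 0, Sum.elim 0 y] := by
    refine LinearIndependent.pair_iff.mpr fun s t hst => ⟨?_, ?_⟩
    · have : s • x = 0 := funext fun i => by simpa using congrFun hst (Sum.inl i)
      exact (smul_eq_zero.mp this).resolve_right hx
    · have : t • y = 0 := funext fun i => by simpa using congrFun hst (Sum.inr i)
      exact (smul_eq_zero.mp this).resolve_right hy
  have hspan : Submodule.span K (Set.range ![Sum.elim x 0, Sum.elim 0 y]) ≤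
      LinearMap.ker (toLin' (fromBlocks 0 B C 0)) := by
    rw [Submodule.span_le, Set.range_subset_iff]
    intro i
    fin_cases i <;> simp [fromBlocks_mulVec, hBy, hCx]
  calc 2 = finrank K (Submodule.span K (Set.range ![Sum.elim x 0, Sum.elim 0 y])) := by
        rw [finrank_span_eq_card hindep, Fintype.card_fin]
    _ ≤ _ := Submodule.finrank_mono hspan

end

theorem det_crossMat (p : Fin 3 → ℝ) : (crossMat p).det = 0 := by
  simp only [crossMat, det_fin_three, of_apply, cons_val', cons_val_zero, cons_val_one, cons_val,
    cons_val_fin_one]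
  ring

theorem two_le_finrank_ker_bigJ (p : Fin 3 → ℝ) :
    2 ≤ finrank ℝ (LinearMap.ker (toLin' (bigJ p))) :=
  two_le_finrank_ker_fromBlocks_zero_zero (by rw [det_neg, det_crossMat, mul_zero])
    (det_crossMat p)

theorem stmt_3_general (p : Fin 3 → ℝ)
    (M : Matrix (Fin 3 ⊕ Fin 3) (Fin 3 ⊕ Fin 3) ℝ) :
    2 ≤ Module.finrank ℝ (LinearMap.ker (Matrix.toLin' (bigJ p * M))) ∧
      2 ≤ Polynomial.rootMultiplicity 0 (Matrix.charpoly (bigJ p * M)) := by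
  have hker := (two_le_finrank_ker_bigJ p).trans (finrank_ker_toLin'_le_mul (bigJ p) M)
  exact ⟨hker, hker.trans (finrank_ker_toLin'_le_rootMultiplicity_zero _)⟩

theorem stmt_3 (p : Fin 3 → ℝ) (hp : p ≠ 0)
    (M : Matrix (Fin 3 ⊕ Fin 3) (Fin 3 ⊕ Fin 3) ℝ) :
    2 ≤ Module.finrank ℝ (LinearMap.ker (Matrix.toLin' (bigJ p * M))) ∧
      2 ≤ Polynomial.rootMultiplicity 0 (Matrix.charpoly (bigJ p * M)) :=
  stmt_3_general p M
end

section
/- Let M be a real 6×6 matrix, J(p) = [[0,−p_ρA^ρ],[p_ρA^ρ,0]], and Q = [[a·I,b·I],[c·I,d·I]] with ad − bc = 1. Then for all p₀ ∈ ℝ and p ∈ ℝ³: det(p₀·I₆ − J(p)·Qᵀ·M·Q) = det(p₀·I₆ − J(p)·M). That is, the SL(2,ℝ) action M ↦ QᵀMQ leaves the characteristic polynomial invariant. -/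
/-!
Write `Q = q ⊗ I` with `q = [[a, b], [c, d]]` and `J(p) = ε ⊗ K` with `ε = [[0, -1], [1, 0]]`.
Since `q ε qᵀ = (det q) ε`, the unimodular `Q` satisfies `Q J Qᵀ = J`, so conjugating
`p₀ I - J Qᵀ M Q` by `Q` gives `p₀ I - (Q J Qᵀ) M = p₀ I - J M`, with the same determinant.
-/

open Matrix

theorem Matrix.det_smul_one_sub_mul_transpose_mul_mul {R m : Type*} [CommRing R] [Fintype m]
    [DecidableEq m] {Q Q' J : Matrix m m R} (hQQ' : Q * Q' = 1) (hQ'Q : Q' * Q = 1)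
    (hJ : Q * J * Qᵀ = J) (x : R) (M : Matrix m m R) :
    (x • 1 - J * Qᵀ * M * Q).det = (x • 1 - J * M).det := by
  have hconj : Q * (x • 1 - J * Qᵀ * M * Q) * Q' = x • 1 - J * M := by
    calc Q * (x • 1 - J * Qᵀ * M * Q) * Q'
        = x • (Q * Q') - (Q * J * Qᵀ) * M * (Q * Q') := by
          simp only [Matrix.mul_sub, Matrix.sub_mul, Matrix.mul_smul, Matrix.smul_mul,
            Matrix.mul_one, Matrix.mul_assoc]
      _ = x • 1 - J * M := by rw [hQQ', hJ, Matrix.mul_one]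
  rw [← hconj, det_conj_of_mul_eq_one hQQ' hQ'Q]

section ScalarBlocks

variable {R n : Type*} [CommRing R] [DecidableEq n]

/-- The Kronecker product `[[a, b], [c, d]] ⊗ I`. -/
def scalarBlocks (a b c d : R) : Matrix (n ⊕ n) (n ⊕ n) R :=
  fromBlocks (a • 1) (b • 1) (c • 1) (d • 1)

theorem scalarBlocks_self_zero_zero_self (x : R) :
    (scalarBlocks x 0 0 x : Matrix (n ⊕ n) (n ⊕ n) R) = x • 1 := by
  rw [scalarBlocks, ← fromBlocks_one, fromBlocks_smul, zero_smul, smul_zero]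

variable [Fintype n]

theorem scalarBlocks_mul_scalarBlocks (a b c d a' b' c' d' : R) :
    (scalarBlocks a b c d : Matrix (n ⊕ n) (n ⊕ n) R) * scalarBlocks a' b' c' d' =
      scalarBlocks (a * a' + b * c') (a * b' + b * d') (c * a' + d * c') (c * b' + d * d') := by
  simp only [scalarBlocks, fromBlocks_multiply, smul_mul_smul_comm, Matrix.mul_one, add_smul]

theorem scalarBlocks_mul_adjugate (a b c d : R) :
    (scalarBlocks a b c d : Matrix (n ⊕ n) (n ⊕ n) R) * scalarBlocks d (-b) (-c) a =
      (a * d - b * c) • 1 := by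
  rw [scalarBlocks_mul_scalarBlocks, ← scalarBlocks_self_zero_zero_self]
  congr 1 <;> ring

theorem adjugate_mul_scalarBlocks (a b c d : R) :
    (scalarBlocks d (-b) (-c) a : Matrix (n ⊕ n) (n ⊕ n) R) * scalarBlocks a b c d =
      (a * d - b * c) • 1 := by
  rw [scalarBlocks_mul_scalarBlocks, ← scalarBlocks_self_zero_zero_self]
  congr 1 <;> ring

theorem scalarBlocks_mul_fromBlocks_mul_transpose (a b c d : R) (K : Matrix n n R) :
    (scalarBlocks a b c d : Matrix (n ⊕ n) (n ⊕ n) R) * fromBlocks 0 (-K) K 0 *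
        (scalarBlocks a b c d)ᵀ =
      (a * d - b * c) • fromBlocks 0 (-K) K 0 := by
  simp only [scalarBlocks, fromBlocks_transpose, transpose_smul, transpose_one, fromBlocks_multiply,
    fromBlocks_smul, Matrix.smul_mul, Matrix.mul_smul, Matrix.mul_zero,
    Matrix.mul_one, Matrix.one_mul, Matrix.mul_neg, smul_neg, smul_smul, add_zero, zero_add,
    smul_zero]
  congr 1 <;> module

end ScalarBlocks

theorem stmt_8 (M : Matrix (Fin 3 ⊕ Fin 3) (Fin 3 ⊕ Fin 3) ℝ)
    (a b c d : ℝ) (h : a * d - b * c = 1) (p₀ : ℝ) (p : Fin 3 → ℝ) :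
    (p₀ • (1 : Matrix (Fin 3 ⊕ Fin 3) (Fin 3 ⊕ Fin 3) ℝ) -
        bigJ p *
          (Matrix.fromBlocks (a • (1 : Matrix (Fin 3) (Fin 3) ℝ)) (b • 1) (c • 1) (d • 1)).transpose *
          M *
          Matrix.fromBlocks (a • (1 : Matrix (Fin 3) (Fin 3) ℝ)) (b • 1) (c • 1) (d • 1)).det
      = (p₀ • (1 : Matrix (Fin 3 ⊕ Fin 3) (Fin 3 ⊕ Fin 3) ℝ) - bigJ p * M).det := by
  have hJ : scalarBlocks a b c d * bigJ p * (scalarBlocks a b c d)ᵀ = bigJ p := by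
    rw [bigJ, scalarBlocks_mul_fromBlocks_mul_transpose, h, one_smul]
  have hQQ' := scalarBlocks_mul_adjugate (n := Fin 3) a b c d
  have hQ'Q := adjugate_mul_scalarBlocks (n := Fin 3) a b c d
  rw [h, one_smul] at hQQ' hQ'Q
  exact det_smul_one_sub_mul_transpose_mul_mul hQQ' hQ'Q hJ p₀ M
end

section
/- For n×n matrices A, B, C, D over a commutative ring with CD = DC, the determinant of the 2n×2n block matrix [[A,B],[C,D]] equals det(AD − BC). -/
/-!
Right multiplication by `[[D, 0], [-C, 1]]` turns `[[A, B], [C, D]]` into the block-triangular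
`[[A * D - B * C, B], [0, D]]` exactly because `C` and `D` commute, so both determinants agree
after multiplication by `det D`. When `det D` is a non-zero-divisor it cancels. In general, pass to
`R[X]` and replace `D` by `X + D`, which still commutes with `C` and has monic, hence regular,
determinant; evaluating the resulting polynomial identity at `X = 0` gives the theorem.
-/

open Matrix Polynomial

namespace Matrix

variable {n R : Type*} [Fintype n] [DecidableEq n] [CommRing R]

theorem det_fromBlocks_mul_det_of_commute (A B C D : Matrix n n R) (h : Commute C D) :
    (fromBlocks A B C D).det * D.det = (A * D - B * C).det * D.det := by
  have hmul : fromBlocks A B C D * fromBlocks D 0 (-C) 1 = fromBlocks (A * D - B * C) B 0 D := by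
    simp [fromBlocks_multiply, sub_eq_add_neg, h.eq]
  simpa using congrArg det hmul

theorem det_fromBlocks_of_commute_of_isRegular (A B C D : Matrix n n R) (h : Commute C D)
    (hD : IsRegular D.det) : (fromBlocks A B C D).det = (A * D - B * C).det :=
  hD.right (det_fromBlocks_mul_det_of_commute A B C D h)

theorem map_evalRingHom_zero_charmatrix_neg (D : Matrix n n R) :
    (charmatrix (-D)).map (evalRingHom 0) = D := by
  ext i j
  by_cases hij : i = j <;> simp [hij]

theorem det_fromBlocks_of_commute (A B C D : Matrix n n R) (h : Commute C D) :
    (fromBlocks A B C D).det = (A * D - B * C).det := by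
  have hcomm : Commute (C.map Polynomial.C) (charmatrix (-D)) := by
    have hX : Commute (C.map Polynomial.C) (scalar n (X : R[X])) :=
      (scalar_commute X (fun _ => commute_X _) _).symm
    have hD : Commute (C.map Polynomial.C) ((-D).map Polynomial.C) :=
      h.neg_right.map (Polynomial.C : R →+* R[X]).mapMatrix
    exact hX.sub_right hD
  have hpoly := det_fromBlocks_of_commute_of_isRegular (A.map Polynomial.C) (B.map Polynomial.C)
    (C.map Polynomial.C) (charmatrix (-D)) hcomm (charpoly_monic (-D)).isRegular
  have hC (M : Matrix n n R) : (M.map Polynomial.C).map (evalRingHom 0) = M := by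
    ext; simp
  have heval := congrArg (evalRingHom (0 : R)) hpoly
  rwa [RingHom.map_det, RingHom.map_det, RingHom.mapMatrix_apply, RingHom.mapMatrix_apply,
    fromBlocks_map, Matrix.map_sub _ (map_sub _), Matrix.map_mul, Matrix.map_mul, hC, hC, hC,
    map_evalRingHom_zero_charmatrix_neg] at heval

end Matrix

theorem stmt_9 {R : Type*} [CommRing R] {n : ℕ}
    (A B C D : Matrix (Fin n) (Fin n) R) (h : C * D = D * C) :
    (Matrix.fromBlocks A B C D).det = (A * D - B * C).det :=
  Matrix.det_fromBlocks_of_commute A B C D h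
end

section
/- Let M be a real 6×6 matrix and define L^ρ = [[0,−A^ρ],[A^ρ,0]]·M. The family {p_ρL^ρ : p ∈ ℝ³} is simultaneously symmetrizable by a fixed invertible 6×6 matrix S (i.e. S⁻¹·(p_ρL^ρ)·S is symmetric for all p) if and only if M is the zero matrix, M is positive definite (as a bilinear form, i.e. the symmetric matrix), or M is negative definite. (Equivalently: such S exists iff M = c·(SSᵀ)⁻¹ for some c ∈ ℝ and invertible S.) -/
/-!
Conjugating by `S`, the matrix `S⁻¹ J(p) M S` is symmetric iff `J(p) M (S Sᵀ)` is. Since `J(p)` is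
symmetric, the latter says `J(p) N = Nᵀ J(p)` for `N = M S Sᵀ`. In `3 × 3` blocks this becomes
intertwining relations `[p]ₓ X = Y [p]ₓ` with the cross-product matrices, and testing them at the
unit vectors forces `N` to be a scalar `c`. Hence `M = c (S Sᵀ)⁻¹`, and such matrices are exactly `0`
and the positive or negative definite ones (a definite `M` is `(S Sᵀ)⁻¹` for `S = √(M⁻¹)`).
-/

open Matrix

section Congruence

variable {n α : Type*} [Fintype n] [DecidableEq n] [CommRing α]

theorem IsUnit.isSymm_mul_mul_transpose_iff {S : Matrix n n α} (hS : IsUnit S)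
    (B : Matrix n n α) : (S * B * Sᵀ).IsSymm ↔ B.IsSymm := by
  simp only [IsSymm, transpose_mul, transpose_transpose, hS.mul_right_inj, ← mul_assoc,
    ((isUnit_transpose S).mpr hS).mul_left_inj]

theorem IsUnit.isSymm_inv_mul_mul_iff {S : Matrix n n α} (hS : IsUnit S)
    (A : Matrix n n α) : (S⁻¹ * A * S).IsSymm ↔ (A * (S * Sᵀ)).IsSymm := by
  have hdet : IsUnit S.det := (isUnit_iff_isUnit_det S).mp hS
  rw [← hS.isSymm_mul_mul_transpose_iff]
  simp only [← mul_assoc, mul_nonsing_inv _ hdet, one_mul]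

end Congruence

theorem crossMat_transpose (p : Fin 3 → ℝ) : (crossMat p)ᵀ = -crossMat p := by
  ext i j
  fin_cases i <;> fin_cases j <;> simp [crossMat]

theorem bigJ_isSymm (p : Fin 3 → ℝ) : (bigJ p).IsSymm := by
  simp [IsSymm, bigJ, fromBlocks_transpose, crossMat_transpose]

theorem exists_eq_smul_one_of_crossMat_mul_eq {X Y : Matrix (Fin 3) (Fin 3) ℝ}
    (h : ∀ p, crossMat p * X = Y * crossMat p) : ∃ c : ℝ, X = c • 1 ∧ Y = c • 1 := by
  have h₀ := h ![1, 0, 0]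
  have h₁ := h ![0, 1, 0]
  have h₂ := h ![0, 0, 1]
  simp only [← Matrix.ext_iff, Fin.forall_fin_succ, IsEmpty.forall_iff, and_true, crossMat,
    mul_apply, Fin.sum_univ_succ] at h₀ h₁ h₂
  simp at h₀ h₁ h₂
  refine ⟨X 0 0, ?_, ?_⟩ <;> ext i j <;> fin_cases i <;> fin_cases j <;> simp <;> grind

theorem eq_zero_of_crossMat_mul_eq_neg_transpose_mul {X : Matrix (Fin 3) (Fin 3) ℝ}
    (h : ∀ p, crossMat p * X = -Xᵀ * crossMat p) : X = 0 := by
  obtain ⟨c, hX, hY⟩ := exists_eq_smul_one_of_crossMat_mul_eq h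
  rw [hX, transpose_smul, transpose_one, ← neg_smul] at hY
  have hc : -c = c := by simpa using congrFun (congrFun hY 0) 0
  rw [hX, show c = 0 by linarith, zero_smul]

theorem exists_eq_smul_one_of_isSymm_bigJ_mul {N : Matrix (Fin 3 ⊕ Fin 3) (Fin 3 ⊕ Fin 3) ℝ}
    (h : ∀ p, (bigJ p * N).IsSymm) : ∃ c : ℝ, N = c • 1 := by
  obtain ⟨A, B, C, D, rfl⟩ : ∃ A B C D, N = fromBlocks A B C D :=
    ⟨_, _, _, _, (fromBlocks_toBlocks N).symm⟩
  have hblocks : ∀ p, crossMat p * -C = -(-C)ᵀ * crossMat p ∧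
      crossMat p * D = Aᵀ * crossMat p ∧ crossMat p * B = -Bᵀ * crossMat p := by
    intro p
    have h := (h p).eq
    rw [transpose_mul, (bigJ_isSymm p).eq] at h
    simp only [bigJ, fromBlocks_multiply, fromBlocks_transpose, fromBlocks_inj] at h
    simp only [zero_mul, mul_zero, add_zero, zero_add, mul_neg, neg_mul, transpose_neg, neg_neg,
      neg_inj] at h ⊢
    exact ⟨h.1.symm, h.2.1.symm, h.2.2.2.symm⟩
  have hC : C = 0 := neg_eq_zero.mp
    (eq_zero_of_crossMat_mul_eq_neg_transpose_mul fun p => (hblocks p).1)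
  have hB : B = 0 := eq_zero_of_crossMat_mul_eq_neg_transpose_mul fun p => (hblocks p).2.2
  obtain ⟨c, hD, hA⟩ := exists_eq_smul_one_of_crossMat_mul_eq fun p => (hblocks p).2.1
  rw [← transpose_transpose A, hA]
  refine ⟨c, ?_⟩
  rw [hC, hB, hD, ← fromBlocks_one, fromBlocks_smul]
  simp

theorem exists_bigJ_symmetrizer_iff (M : Matrix (Fin 3 ⊕ Fin 3) (Fin 3 ⊕ Fin 3) ℝ) :
    (∃ S, IsUnit S ∧ ∀ p, (S⁻¹ * (bigJ p * M) * S).IsSymm) ↔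
      ∃ (c : ℝ) (S : Matrix (Fin 3 ⊕ Fin 3) (Fin 3 ⊕ Fin 3) ℝ),
        IsUnit S ∧ M = c • (S * Sᵀ)⁻¹ := by
  constructor
  · rintro ⟨S, hS, h⟩
    have hP : IsUnit (S * Sᵀ) := hS.mul ((isUnit_transpose S).mpr hS)
    obtain ⟨c, hc⟩ := exists_eq_smul_one_of_isSymm_bigJ_mul (N := M * (S * Sᵀ)) fun p => by
      simpa only [mul_assoc] using (hS.isSymm_inv_mul_mul_iff _).mp (h p)
    refine ⟨c, S, hS, ?_⟩
    rw [← smul_one_mul c, ← hc, mul_nonsing_inv_cancel_right _ _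
      ((isUnit_iff_isUnit_det _).mp hP)]
  · rintro ⟨c, S, hS, rfl⟩
    have hP : IsUnit (S * Sᵀ).det :=
      (isUnit_iff_isUnit_det _).mp (hS.mul ((isUnit_transpose S).mpr hS))
    refine ⟨S, hS, fun p => (hS.isSymm_inv_mul_mul_iff _).mpr ?_⟩
    rw [Matrix.mul_smul, Matrix.smul_mul, mul_assoc, nonsing_inv_mul _ hP, mul_one]
    exact (bigJ_isSymm p).smul c

section PosDef

variable {n : Type*} [Fintype n] [DecidableEq n]

open scoped MatrixOrder in
theorem Matrix.PosDef.exists_isUnit_mul_transpose_eq {M : Matrix n n ℝ} (hM : M.PosDef) :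
    ∃ S : Matrix n n ℝ, IsUnit S ∧ S * Sᵀ = M := by
  have hsqrt : CFC.sqrt M * CFC.sqrt M = M := CFC.sqrt_mul_sqrt_self M hM.posSemidef.nonneg
  have hsymm : (CFC.sqrt M)ᵀ = CFC.sqrt M := by
    rw [← conjTranspose_eq_transpose_of_trivial]
    exact (CFC.sqrt_nonneg M).posSemidef.1
  refine ⟨CFC.sqrt M, isUnit_of_mul_isUnit_left (hsqrt ▸ hM.isUnit), by rw [hsymm, hsqrt]⟩

theorem exists_eq_smul_inv_mul_transpose_iff (M : Matrix n n ℝ) :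
    (∃ (c : ℝ) (S : Matrix n n ℝ), IsUnit S ∧ M = c • (S * Sᵀ)⁻¹) ↔
      M = 0 ∨ M.PosDef ∨ (-M).PosDef := by
  constructor
  · rintro ⟨c, S, hS, rfl⟩
    have hP : ((S * Sᵀ)⁻¹).PosDef := by
      rw [posDef_inv_iff, ← conjTranspose_eq_transpose_of_trivial]
      exact .mul_conjTranspose_self S (vecMul_injective_iff_isUnit.mpr hS)
    rcases lt_trichotomy c 0 with hc | rfl | hc
    · exact .inr (.inr (by simpa only [← neg_smul] using hP.smul (neg_pos.mpr hc)))
    · exact .inl (zero_smul _ _)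
    · exact .inr (.inl (hP.smul hc))
  · have of_posDef {N : Matrix n n ℝ} (hN : N.PosDef) : ∃ S, IsUnit S ∧ (S * Sᵀ)⁻¹ = N := by
      obtain ⟨S, hS, hSN⟩ := hN.inv.exists_isUnit_mul_transpose_eq
      exact ⟨S, hS, by rw [hSN, nonsing_inv_nonsing_inv _ ((isUnit_iff_isUnit_det _).mp hN.isUnit)]⟩
    rintro (rfl | hM | hM)
    · exact ⟨0, 1, isUnit_one, (zero_smul _ _).symm⟩
    · obtain ⟨S, hS, hSM⟩ := of_posDef hM
      exact ⟨1, S, hS, by rw [one_smul, hSM]⟩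
    · obtain ⟨S, hS, hSM⟩ := of_posDef hM
      exact ⟨-1, S, hS, by rw [neg_smul, one_smul, hSM, neg_neg]⟩

end PosDef

theorem stmt_11 (M : Matrix (Fin 3 ⊕ Fin 3) (Fin 3 ⊕ Fin 3) ℝ) :
    ((∃ S : Matrix (Fin 3 ⊕ Fin 3) (Fin 3 ⊕ Fin 3) ℝ, IsUnit S ∧
        ∀ p : Fin 3 → ℝ, (S⁻¹ * (bigJ p * M) * S).IsSymm)
      ↔ (M = 0 ∨ M.PosDef ∨ (-M).PosDef)) ∧
    ((∃ S : Matrix (Fin 3 ⊕ Fin 3) (Fin 3 ⊕ Fin 3) ℝ, IsUnit S ∧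
        ∀ p : Fin 3 → ℝ, (S⁻¹ * (bigJ p * M) * S).IsSymm)
      ↔ (∃ (c : ℝ) (S : Matrix (Fin 3 ⊕ Fin 3) (Fin 3 ⊕ Fin 3) ℝ),
          IsUnit S ∧ M = c • (S * S.transpose)⁻¹)) :=
  ⟨(exists_bigJ_symmetrizer_iff M).trans (exists_eq_smul_inv_mul_transpose_iff M),
    exists_bigJ_symmetrizer_iff M⟩
end

section
/- If invertible real matrices S and M satisfy M·S·Sᵀ = [[b·I, d·I],[a·I, c·I]] (block form with 3×3 blocks) and S·Sᵀ·Mᵀ = [[c·I, −a·I],[−d·I, b·I]] for real numbers a,b,c,d, then a = d = 0 and b = c, so that M = b·(SSᵀ)⁻¹. -/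
/-!
Since `S * Sᵀ` is symmetric, transposing the second identity gives a second block form of
`M * S * Sᵀ`. Comparing the two forces `a = d = 0` and `b = c`, so `M * (S * Sᵀ) = b • 1`, and
`S * Sᵀ` is invertible because `S` is.
-/

namespace Matrix

variable {n R : Type*} [Fintype n] [CommRing R]

theorem mul_mul_transpose_eq_transpose (A M : Matrix n n R) :
    M * A * Aᵀ = (A * Aᵀ * Mᵀ)ᵀ := by
  simp only [transpose_mul, transpose_transpose, mul_assoc]

variable [DecidableEq n]

theorem smul_one_inj [Nonempty n] {b c : R} :
    b • (1 : Matrix n n R) = c • 1 ↔ b = c := by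
  rw [smul_one_eq_diagonal, smul_one_eq_diagonal, ← scalar_apply, ← scalar_apply, scalar_inj]

theorem fromBlocks_smul_one_eq_swap_iff [Nonempty n] [IsAddTorsionFree R] {a b c d : R} :
    fromBlocks (b • (1 : Matrix n n R)) (d • (1 : Matrix n n R)) (a • (1 : Matrix n n R))
        (c • 1) = fromBlocks (c • 1) ((-d) • 1) ((-a) • 1) (b • 1) ↔
      a = 0 ∧ d = 0 ∧ b = c := by
  simp only [fromBlocks_inj, smul_one_inj, self_eq_neg]
  tauto

theorem eq_smul_inv_of_mul_eq_smul_one {M P : Matrix n n R} {b : R} (hP : IsUnit P.det)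
    (h : M * P = b • 1) : M = b • P⁻¹ :=
  calc M = M * P * P⁻¹ := (mul_nonsing_inv_cancel_right P M hP).symm
    _ = b • P⁻¹ := by rw [h, smul_mul, one_mul]

end Matrix

open Matrix

theorem stmt_12_general (S M : Matrix (Fin 3 ⊕ Fin 3) (Fin 3 ⊕ Fin 3) ℝ)
    (hS : IsUnit S) (a b c d : ℝ)
    (h1 : M * S * S.transpose =
      Matrix.fromBlocks (b • (1 : Matrix (Fin 3) (Fin 3) ℝ)) (d • 1) (a • 1) (c • 1))
    (h2 : S * S.transpose * M.transpose =
      Matrix.fromBlocks (c • (1 : Matrix (Fin 3) (Fin 3) ℝ)) ((-a) • 1) ((-d) • 1) (b • 1)) :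
    a = 0 ∧ d = 0 ∧ b = c ∧ M = b • (S * S.transpose)⁻¹ := by
  have h1_swapped : M * S * Sᵀ = fromBlocks (c • 1) ((-d) • 1) ((-a) • 1) (b • 1) := by
    rw [mul_mul_transpose_eq_transpose, h2]
    simp only [fromBlocks_transpose, transpose_smul, transpose_one]
  obtain ⟨rfl, rfl, rfl⟩ := fromBlocks_smul_one_eq_swap_iff.1 (h1.symm.trans h1_swapped)
  have hSSt : IsUnit (S * Sᵀ).det :=
    (isUnit_iff_isUnit_det _).1 (hS.mul ((isUnit_transpose S).2 hS))
  refine ⟨rfl, rfl, rfl, eq_smul_inv_of_mul_eq_smul_one hSSt ?_⟩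
  rw [← mul_assoc, h1, zero_smul, ← fromBlocks_one, fromBlocks_smul, smul_zero]

theorem stmt_12 (S M : Matrix (Fin 3 ⊕ Fin 3) (Fin 3 ⊕ Fin 3) ℝ)
    (hS : IsUnit S) (hM : IsUnit M) (a b c d : ℝ)
    (h1 : M * S * S.transpose =
      Matrix.fromBlocks (b • (1 : Matrix (Fin 3) (Fin 3) ℝ)) (d • 1) (a • 1) (c • 1))
    (h2 : S * S.transpose * M.transpose =
      Matrix.fromBlocks (c • (1 : Matrix (Fin 3) (Fin 3) ℝ)) ((-a) • 1) ((-d) • 1) (b • 1)) :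
    a = 0 ∧ d = 0 ∧ b = c ∧ M = b • (S * S.transpose)⁻¹ :=
  stmt_12_general S M hS a b c d h1 h2
end

section
/- For a biisotropic constitutive matrix M = [[κI,χI],[γI,νI]], all roots p₀ of the characteristic polynomial p₀²·((p₀² − |p|²(κν−χγ))² + p₀²|p|²(χ−γ)²) are real for every p ∈ ℝ³ if and only if χ = γ and κν − χγ ≥ 0. -/
/-!
At `|p| = 1` the quartic factor splits over `ℂ` as `(z² - i c z - D)(z² + i c z - D)` with
`c = χ - γ`, `D = κν - χγ`. If `c ≠ 0`, the two roots of the first factor sum to `i c`, so one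
of them is not real; if `c = 0` and `D < 0`, then `i √(-D)` is a root. Conversely, if `c = 0` the
nonzero roots satisfy `z² = |p|² D`, which forces `z` to be real when `|p|² D ≥ 0`.
-/

open Complex

/-- The characteristic polynomial in `z = p₀`, with `s = |p|²`, `D = κν - χγ`, `c = χ - γ`. -/
def dispersion (s D c : ℝ) (z : ℂ) : ℂ :=
  z ^ 2 * ((z ^ 2 - (s : ℂ) * (D : ℂ)) ^ 2 + z ^ 2 * (s : ℂ) * (c : ℂ) ^ 2)

lemma dispersion_one (D c : ℝ) (z : ℂ) :
    dispersion 1 D c z = z ^ 2 * ((z ^ 2 - I * c * z - D) * (z ^ 2 + I * c * z - D)) := by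
  unfold dispersion
  push_cast
  linear_combination (z ^ 4 * (c : ℂ) ^ 2) * I_sq

lemma dispersion_zero_right (s D : ℝ) (z : ℂ) :
    dispersion s D 0 z = z ^ 2 * (z ^ 2 - ((s * D : ℝ) : ℂ)) ^ 2 := by
  simp [dispersion]

lemma Complex.im_eq_zero_of_sq_eq_ofReal {r : ℝ} (hr : 0 ≤ r) {z : ℂ} (h : z ^ 2 = r) :
    z.im = 0 := by
  have hre : z.re * z.re - z.im * z.im = r := by simpa [sq] using congrArg re h
  have him : z.re * z.im + z.im * z.re = 0 := by simpa [sq] using congrArg im h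
  by_contra hz
  have hre0 : z.re = 0 := by
    have : 2 * z.im * z.re = 0 := by linarith
    simpa [hz] using this
  nlinarith [mul_self_pos.2 hz]

lemma Complex.exists_quadratic_root_im_ne_zero {b d : ℂ} (hb : b.im ≠ 0) :
    ∃ z : ℂ, z ^ 2 + b * z + d = 0 ∧ z.im ≠ 0 := by
  obtain ⟨s, hs⟩ := IsAlgClosed.exists_eq_mul_self (discrim 1 b d)
  obtain ⟨z, hz⟩ := exists_quadratic_eq_zero one_ne_zero ⟨s, hs⟩
  rw [one_mul, ← sq] at hz
  by_cases hzim : z.im = 0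
  · -- the roots sum to `-b`
    refine ⟨-b - z, by linear_combination hz, ?_⟩
    simpa [hzim] using hb
  · exact ⟨z, hz, hzim⟩

lemma Complex.exists_sq_eq_ofReal_im_ne_zero {D : ℝ} (hD : D < 0) :
    ∃ z : ℂ, z ^ 2 = D ∧ z.im ≠ 0 := by
  refine ⟨I * Real.sqrt (-D), ?_, by simpa using (Real.sqrt_pos.2 (neg_pos.2 hD)).ne'⟩
  rw [mul_pow, I_sq, ← ofReal_pow, Real.sq_sqrt (neg_nonneg.2 hD.le)]
  push_cast
  ring

lemma eq_zero_and_nonneg_of_dispersion_one_roots_real {D c : ℝ}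
    (h : ∀ z : ℂ, dispersion 1 D c z = 0 → z.im = 0) : c = 0 ∧ 0 ≤ D := by
  have hc : c = 0 := by
    by_contra hc
    obtain ⟨z, hz, hzim⟩ :=
      Complex.exists_quadratic_root_im_ne_zero (b := -(I * c)) (d := -D) (by simpa using hc)
    refine hzim (h z ?_)
    rw [dispersion_one]
    linear_combination z ^ 2 * (z ^ 2 + I * c * z - D) * hz
  refine ⟨hc, ?_⟩
  by_contra! hD
  obtain ⟨z, hz, hzim⟩ := Complex.exists_sq_eq_ofReal_im_ne_zero hD
  exact hzim (h z (by simp [dispersion_zero_right, hc, hz]))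

lemma im_eq_zero_of_dispersion_eq_zero {s D : ℝ} (hs : 0 ≤ s) (hD : 0 ≤ D) {z : ℂ}
    (h : dispersion s D 0 z = 0) : z.im = 0 := by
  rw [dispersion_zero_right] at h
  rcases mul_eq_zero.1 h with hz | hz
  · simp [pow_eq_zero_iff two_ne_zero |>.1 hz]
  · exact Complex.im_eq_zero_of_sq_eq_ofReal (mul_nonneg hs hD)
      (sub_eq_zero.1 (pow_eq_zero_iff two_ne_zero |>.1 hz))

theorem stmt_15 (κ χ γ ν : ℝ) :
    (∀ p : Fin 3 → ℝ, ∀ z : ℂ,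
        z ^ 2 * ((z ^ 2 - ((∑ i, p i ^ 2 : ℝ) : ℂ) * ((κ * ν - χ * γ : ℝ) : ℂ)) ^ 2 +
            z ^ 2 * ((∑ i, p i ^ 2 : ℝ) : ℂ) * (((χ - γ : ℝ)) : ℂ) ^ 2) = 0 →
          z.im = 0)
      ↔ (χ = γ ∧ κ * ν - χ * γ ≥ 0) := by
  constructor
  · intro h
    have hunit : ∑ i, (![1, 0, 0] : Fin 3 → ℝ) i ^ 2 = 1 := by simp [Fin.sum_univ_three]
    obtain ⟨hc, hD⟩ := eq_zero_and_nonneg_of_dispersion_one_roots_real (D := κ * ν - χ * γ)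
      (c := χ - γ) fun z hz ↦ h ![1, 0, 0] z (by rwa [← hunit] at hz)
    exact ⟨sub_eq_zero.1 hc, hD⟩
  · rintro ⟨rfl, hD⟩ p z hz
    rw [sub_self] at hz
    exact im_eq_zero_of_dispersion_eq_zero (Finset.sum_nonneg fun i _ ↦ sq_nonneg (p i)) hD hz
end
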